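/- arXiv:1310.3487 — 2 statements merged into one kernel-verified Lean document; each statement's English description precedes it below -/
import Mathlib

section
/- For symmetric threats the Nucleolus equals the Proportional Allocation: suppose there is a constant τ such that v(S) = τ·r_S for every nonempty proper coalition S. Then (i) at the Proportional Allocation J̃ (J̃^i = (r^i/R)·J*_sys), the excess of every nonempty proper coalition equals e_S(J̃) = (1/R)·J*_sys − τ; and (ii) no J ∈ 𝒥*_sys has sorted excess vector e*(J) lexicographically strictly smaller than e*(J̃); hence the Nucleolus is the Proportional Allocation. -/
open scoped BigOperators

/-- Parallel-links routing model: `L ≥ 1` links with capacities `c l > 0` and a latency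
function `T : ℝ → ℝ`, where the per-unit latency of link `l` under total flow `x` is
`T_l(x) = T (c l - x)`, and each such link latency `T_l` is positive, strictly increasing,
convex and continuously differentiable on `[0, c l)`. -/
structure Model (L : ℕ) where
  hL : 0 < L
  c : Fin L → ℝ
  T : ℝ → ℝ
  c_pos : ∀ l, 0 < c l
  T_pos : ∀ (l : Fin L), ∀ x ∈ Set.Ico (0 : ℝ) (c l), 0 < T (c l - x)
  T_mono : ∀ l : Fin L, StrictMonoOn (fun x => T (c l - x)) (Set.Ico 0 (c l))
  T_convex : ∀ l : Fin L, ConvexOn ℝ (Set.Ico 0 (c l)) (fun x => T (c l - x))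
  T_smooth : ∀ l : Fin L, ContDiffOn ℝ 1 (fun x => T (c l - x)) (Set.Ico 0 (c l))

/-- A flow vector for demand `r`: nonnegative components summing to `r`. -/
def IsFlow {L : ℕ} (r : ℝ) (f : Fin L → ℝ) : Prop :=
  (∀ l, 0 ≤ f l) ∧ ∑ l, f l = r

namespace Model

variable {L : ℕ}

/-- The derivative `T_l'` of the link latency `T_l = fun x => T (c l - x)`. -/
noncomputable def Tl' (M : Model L) (l : Fin L) : ℝ → ℝ :=
  deriv (fun x => M.T (M.c l - x))

/-- The follower's cost of flow `f` against adversary flow `g`: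
`∑ l, f l * T (c l - g l - f l)`. -/
noncomputable def cost (M : Model L) (g f : Fin L → ℝ) : ℝ :=
  ∑ l, f l * M.T (M.c l - g l - f l)

/-- `Φ(g)`: the follower's optimal cost, for follower demand `s`, against
the adversary flow `g`. -/
noncomputable def Phi (M : Model L) (s : ℝ) (g : Fin L → ℝ) : ℝ :=
  sInf { J | ∃ f : Fin L → ℝ, IsFlow s f ∧ (∀ l, 0 < f l → g l + f l < M.c l) ∧
    J = M.cost g f }

/-- `W(s)`: the worst-case Stackelberg value for follower demand `s`,
where the adversary has demand `R - s`. -/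
noncomputable def W (M : Model L) (R s : ℝ) : ℝ :=
  sSup { J | ∃ g : Fin L → ℝ, IsFlow (R - s) g ∧ J = M.Phi s g }

/-- The nonatomic (Wardrop) condition of `h ≥ 0` with respect to the total flow `t`. -/
def WardropCond (M : Model L) (h t : Fin L → ℝ) : Prop :=
  ∀ l n : Fin L, t n < M.c n → 0 < h l →
    t l < M.c l ∧ M.T (M.c l - t l) ≤ M.T (M.c n - t n)

/-- The atomic KKT condition of `h ≥ 0` with respect to the total flow `t`. -/
def AtomicKKT (M : Model L) (h t : Fin L → ℝ) : Prop :=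
  ∀ l n : Fin L, t n < M.c n → 0 < h l →
    t l < M.c l ∧
      M.T (M.c l - t l) + h l * M.Tl' l (t l)
        ≤ M.T (M.c n - t n) + h n * M.Tl' n (t n)

end Model

/-- The nonempty proper coalitions of `{1, …, N}`. -/
def properCoalitions (N : ℕ) : Finset (Finset (Fin N)) :=
  Finset.univ.filter (fun S => S.Nonempty ∧ S ≠ Finset.univ)

/-- The excess of coalition `S` at cost vector `J`, for coalition values `v`:
`e_S(J) = (∑_{i ∈ S} J i − v S) / r_S`. -/
noncomputable def excess {N : ℕ} (r : Fin N → ℝ) (v : Finset (Fin N) → ℝ)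
    (S : Finset (Fin N)) (J : Fin N → ℝ) : ℝ :=
  (∑ i ∈ S, J i - v S) / ∑ i ∈ S, r i

/-- `e*(J)`: the excesses of all nonempty proper coalitions at `J`, arranged in
nonincreasing order. -/
noncomputable def sortedExcess {N : ℕ} (r : Fin N → ℝ) (v : Finset (Fin N) → ℝ)
    (J : Fin N → ℝ) : List ℝ :=
  ((properCoalitions N).val.map (fun S => excess r v S J)).sort (· ≥ ·)

/-- The system-optimal cost vectors `𝒥*_sys`. -/
def sysOptCosts {L N : ℕ} (M : Model L) (r : Fin N → ℝ) (fstar : Fin L → ℝ) :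
    Set (Fin N → ℝ) :=
  { J | ∃ f : Fin N → Fin L → ℝ, (∀ i, IsFlow (r i) (f i)) ∧
      (∀ l, ∑ i, f i l = fstar l) ∧
      ∀ i, J i = ∑ l, f i l * M.T (M.c l - fstar l) }


private lemma lex_irrefl' (l : List ℝ) : ¬ List.Lex (· < ·) l l := by
  induction l with
  | nil => intro h; cases h
  | cons a t ih =>
    intro h
    cases h with
    | cons h => exact ih h
    | rel h => exact lt_irrefl _ h

private lemma not_lex_replicate (e : ℝ) (l : List ℝ) (hs : l.Pairwise (· ≥ ·))
    (x : ℝ) (hx : x ∈ l) (hex : e < x) :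
    ¬ List.Lex (· < ·) l (List.replicate l.length e) := by
  cases l with
  | nil => cases hx
  | cons a t =>
    have hxa : x ≤ a := by
      rcases List.mem_cons.1 hx with h | h
      · exact le_of_eq h
      · exact (List.pairwise_cons.1 hs).1 x h
    intro hlex
    rw [List.length_cons, List.replicate_succ] at hlex
    cases hlex with
    | rel h => exact absurd h (not_lt.2 (le_of_lt (lt_of_lt_of_le hex hxa)))
    | cons h => exact absurd hex (not_lt.2 hxa)

/-- For symmetric threats the Nucleolus equals the Proportional
Allocation: if `v S = τ * r_S` for every nonempty proper coalition `S`, then (i) at the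
PA every nonempty proper coalition has excess `(1/R) * J*_sys − τ`, and (ii) the PA is
system optimal and no system-optimal cost vector has a sorted excess vector
lexicographically strictly smaller than that of the PA. -/
theorem nucleolus_eq_PA_symmetric_threats
    {L N : ℕ} (M : Model L) (r : Fin N → ℝ) (R : ℝ)
    (hr : ∀ i, 0 < r i) (hrsum : ∑ i, r i = R)
    (hR : 0 < R) (hRc : R < ∑ l, M.c l)
    (fstar : Fin L → ℝ)
    (hfs : IsFlow R fstar) (hfs_lt : ∀ l, fstar l < M.c l)
    (hfs_opt : ∀ f : Fin L → ℝ, IsFlow R f → (∀ l, f l < M.c l) →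
      ∑ l, fstar l * M.T (M.c l - fstar l) ≤ ∑ l, f l * M.T (M.c l - f l))
    (v : Finset (Fin N) → ℝ) (τ : ℝ)
    (hv : ∀ S ∈ properCoalitions N, v S = τ * ∑ i ∈ S, r i) :
    -- (i) every nonempty proper coalition has the same excess at the PA
    (∀ S ∈ properCoalitions N,
      excess r v S (fun i => r i / R * ∑ l, fstar l * M.T (M.c l - fstar l)) =
        (1 / R) * (∑ l, fstar l * M.T (M.c l - fstar l)) - τ) ∧
    -- (ii) the PA is system optimal and lexicographically minimal
    (fun i => r i / R * ∑ l, fstar l * M.T (M.c l - fstar l)) ∈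
        sysOptCosts M r fstar ∧
    ∀ J ∈ sysOptCosts M r fstar,
      ¬ List.Lex (· < ·)
          (sortedExcess r v J)
          (sortedExcess r v
            (fun i => r i / R * ∑ l, fstar l * M.T (M.c l - fstar l))) := by
    classical
  set Jsys : ℝ := ∑ l, fstar l * M.T (M.c l - fstar l) with hJsysdef
  set e : ℝ := (1 / R) * Jsys - τ with hedef
  have hRne : R ≠ 0 := hR.ne'
  have hrSpos : ∀ S : Finset (Fin N), S.Nonempty → 0 < ∑ i ∈ S, r i := by
    intro S hS
    exact Finset.sum_pos (fun i _ => hr i) hS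
  have hmem : ∀ S ∈ properCoalitions N, S.Nonempty ∧ S ≠ Finset.univ := by
    intro S hS
    exact (Finset.mem_filter.1 hS).2
  -- Part (i)
  have hpartI : ∀ S ∈ properCoalitions N,
      excess r v S (fun i => r i / R * Jsys) = e := by
    intro S hS
    have hrS : (0:ℝ) < ∑ i ∈ S, r i := hrSpos S (hmem S hS).1
    unfold excess
    rw [hv S hS]
    have hsum : ∑ i ∈ S, (r i / R * Jsys) = (∑ i ∈ S, r i) * ((1/R) * Jsys) := by
      rw [Finset.sum_congr rfl (fun i _ => by ring :
        ∀ i ∈ S, r i / R * Jsys = r i * ((1/R) * Jsys)), ← Finset.sum_mul]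
    rw [hsum, hedef]
    field_simp
  refine ⟨hpartI, ?_, ?_⟩
  -- Part (ii) membership
  · refine ⟨fun i l => r i / R * fstar l, ?_, ?_, ?_⟩
    · intro i
      constructor
      · intro l
        exact mul_nonneg (div_nonneg (hr i).le hR.le) (hfs.1 l)
      · rw [← Finset.mul_sum, hfs.2, div_mul_cancel₀ _ hRne]
    · intro l
      have : ∑ i, r i / R * fstar l = (∑ i, r i) * (fstar l / R) := by
        rw [Finset.sum_congr rfl (fun i _ => by ring :
          ∀ i ∈ Finset.univ, r i / R * fstar l = r i * (fstar l / R)), ← Finset.sum_mul]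
      rw [this, hrsum, mul_div_assoc']
      rw [mul_comm]
      exact mul_div_cancel_right₀ _ hRne
    · intro i
      show r i / R * Jsys = ∑ l, r i / R * fstar l * M.T (M.c l - fstar l)
      rw [hJsysdef, Finset.mul_sum]
      exact Finset.sum_congr rfl (fun l _ => by ring)
  -- Part (iii)
  · intro J hJ hlex
    obtain ⟨f, hf, hfsum, hJdef⟩ := hJ
    have hJtot : ∑ i, J i = Jsys := by
      calc ∑ i, J i = ∑ i, ∑ l, f i l * M.T (M.c l - fstar l) :=
            Finset.sum_congr rfl (fun i _ => hJdef i)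
        _ = ∑ l, ∑ i, f i l * M.T (M.c l - fstar l) := Finset.sum_comm
        _ = ∑ l, (∑ i, f i l) * M.T (M.c l - fstar l) := by
            exact Finset.sum_congr rfl (fun l _ => (Finset.sum_mul ..).symm)
        _ = Jsys := Finset.sum_congr rfl (fun l _ => by rw [hfsum l])
    have hlenJ : (sortedExcess r v J).length = (properCoalitions N).card := by
      unfold sortedExcess
      rw [Multiset.length_sort, Multiset.card_map]
      rfl
    have hPAlist : sortedExcess r v (fun i => r i / R * Jsys) =
        List.replicate ((properCoalitions N).card) e := by
      apply List.eq_replicate_iff.2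
      constructor
      · unfold sortedExcess
        rw [Multiset.length_sort, Multiset.card_map]
        rfl
      · intro b hb
        unfold sortedExcess at hb
        rw [Multiset.mem_sort] at hb
        obtain ⟨S, hS, rfl⟩ := Multiset.mem_map.1 hb
        exact hpartI S hS
    by_cases hgt : ∃ S ∈ properCoalitions N, e < excess r v S J
    · obtain ⟨S, hS, hlt⟩ := hgt
      have hxmem : excess r v S J ∈ sortedExcess r v J := by
        unfold sortedExcess
        rw [Multiset.mem_sort]
        exact Multiset.mem_map.2 ⟨S, hS, rfl⟩
      rw [hPAlist, ← hlenJ] at hlex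
      exact not_lex_replicate e _ (Multiset.pairwise_sort _ _) _ hxmem hlt hlex
    · push_neg at hgt
      have hEdef : ∀ T ∈ properCoalitions N,
          ∑ i ∈ T, J i = excess r v T J * (∑ i ∈ T, r i) + τ * (∑ i ∈ T, r i) := by
        intro T hT
        have hrT : (0:ℝ) < ∑ i ∈ T, r i := hrSpos T (hmem T hT).1
        unfold excess
        rw [hv T hT, div_mul_cancel₀ _ hrT.ne']
        ring
      have hall : ∀ S ∈ properCoalitions N, excess r v S J = e := by
        intro S hS
        by_contra hne
        have hlt : excess r v S J < e := lt_of_le_of_ne (hgt S hS) hne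
        have hScmem : Sᶜ ∈ properCoalitions N := by
          rw [properCoalitions, Finset.mem_filter]
          refine ⟨Finset.mem_univ _, ?_, ?_⟩
          · rw [Finset.nonempty_iff_ne_empty]
            intro h
            rw [Finset.compl_eq_empty_iff] at h
            exact (hmem S hS).2 h
          · intro h
            rw [Finset.compl_eq_univ_iff] at h
            exact (hmem S hS).1.ne_empty h
        have hrS : (0:ℝ) < ∑ i ∈ S, r i := hrSpos S (hmem S hS).1
        have hrSc : (0:ℝ) < ∑ i ∈ Sᶜ, r i := hrSpos Sᶜ (hmem Sᶜ hScmem).1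
        have hsplitJ : (∑ i ∈ S, J i) + (∑ i ∈ Sᶜ, J i) = Jsys := by
          rw [Finset.sum_add_sum_compl, hJtot]
        have hsplitr : (∑ i ∈ S, r i) + (∑ i ∈ Sᶜ, r i) = R := by
          rw [Finset.sum_add_sum_compl, hrsum]
        have h1 := hEdef S hS
        have h2 := hEdef Sᶜ hScmem
        have hle2 : excess r v Sᶜ J ≤ e := hgt Sᶜ hScmem
        have hm1 : excess r v S J * (∑ i ∈ S, r i) < e * (∑ i ∈ S, r i) :=
          mul_lt_mul_of_pos_right hlt hrS
        have hm2 : excess r v Sᶜ J * (∑ i ∈ Sᶜ, r i) ≤ e * (∑ i ∈ Sᶜ, r i) :=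
          mul_le_mul_of_nonneg_right hle2 hrSc.le
        have hER : e * (∑ i ∈ S, r i) + e * (∑ i ∈ Sᶜ, r i) = e * R := by
          rw [← mul_add, hsplitr]
        have hτR : τ * (∑ i ∈ S, r i) + τ * (∑ i ∈ Sᶜ, r i) = τ * R := by
          rw [← mul_add, hsplitr]
        have hJe : Jsys = e * R + τ * R := by
          rw [hedef]
          field_simp
          ring
        linarith
      have hJlist : sortedExcess r v J =
          List.replicate ((properCoalitions N).card) e := by
        apply List.eq_replicate_iff.2
        refine ⟨hlenJ, ?_⟩
        intro b hb
        unfold sortedExcess at hb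
        rw [Multiset.mem_sort] at hb
        obtain ⟨S, hS, rfl⟩ := Multiset.mem_map.1 hb
        exact hall S hS
      rw [hPAlist, hJlist] at hlex
      exact lex_irrefl' _ hlex
end

section
/- If the N user demands take at most K distinct values, then the number of distinct possible coalition demand totals is at most ∑_{s=1}^{N−1} C(s + K − 1, K − 1); that is, for r : {1,…,N} → ℝ with r_i > 0 for all i and |{ r_i : 1 ≤ i ≤ N }| ≤ K, the cardinality of the set { ∑_{i∈S} r_i : S a nonempty proper subset of {1,…,N} } is at most ∑_{s=1}^{N−1} C(s + K − 1, K − 1), and hence at most (N + K)^K. -/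
open scoped BigOperators

/-- If the `N` user demands take at most `K` distinct values, then the
number of distinct possible coalition demand totals (over nonempty proper coalitions)
is at most `∑_{s=1}^{N−1} C(s+K−1, K−1)`, hence at most `(N+K)^K`. -/
theorem coalition_demand_totals_bound
    (N K : ℕ) (r : Fin N → ℝ) (hr : ∀ i, 0 < r i)
    (hK : (Finset.univ.image r).card ≤ K) :
    (Finset.image (fun S => ∑ i ∈ S, r i)
          ((Finset.univ : Finset (Finset (Fin N))).filter
            (fun S => S.Nonempty ∧ S ≠ Finset.univ))).card
        ≤ ∑ s ∈ Finset.Icc 1 (N - 1), Nat.choose (s + K - 1) (K - 1) ∧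
    (Finset.image (fun S => ∑ i ∈ S, r i)
          ((Finset.univ : Finset (Finset (Fin N))).filter
            (fun S => S.Nonempty ∧ S ≠ Finset.univ))).card
        ≤ (N + K) ^ K := by
  classical
  rcases Nat.eq_zero_or_pos N with hN | hN
  · subst hN
    have hempty : ((Finset.univ : Finset (Finset (Fin 0))).filter
        (fun S => S.Nonempty ∧ S ≠ Finset.univ)) = ∅ := by
      ext S
      simp only [Finset.mem_filter, Finset.mem_univ, true_and, Finset.notMem_empty,
        iff_false, not_and]
      intro hS
      obtain ⟨i, _⟩ := hS
      exact absurd i.2 (by omega)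
    rw [hempty]
    simp
  -- N ≥ 1, hence K ≥ 1
  have hK1 : 1 ≤ K := by
    refine le_trans ?_ hK
    have : r ⟨0, hN⟩ ∈ Finset.univ.image r := Finset.mem_image_of_mem r (Finset.mem_univ _)
    exact le_trans (Finset.card_pos.mpr ⟨_, this⟩) le_rfl
  set V : Finset ℝ := Finset.univ.image r with hV
  have hkK : V.card ≤ K := hK
  -- per-size bound
  have hsize : ∀ s : ℕ, (Finset.image (fun S => ∑ i ∈ S, r i)
      (Finset.powersetCard s (Finset.univ : Finset (Fin N)))).card
      ≤ Nat.choose (s + K - 1) (K - 1) := by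
    intro s
    have hmem : ∀ i : Fin N, r i ∈ V := fun i => Finset.mem_image_of_mem r (Finset.mem_univ _)
    have hsurj : Set.SurjOn (fun σ : Sym (↥V) s => (σ.1.map Subtype.val).sum)
        ((Finset.univ : Finset (Sym (↥V) s)) : Set (Sym (↥V) s))
        ((Finset.image (fun S => ∑ i ∈ S, r i)
          (Finset.powersetCard s (Finset.univ : Finset (Fin N)))) : Set ℝ) := by
      intro x hx
      simp only [Finset.coe_image, Set.mem_image, Finset.mem_coe,
        Finset.mem_powersetCard_univ] at hx
      obtain ⟨S, hScard, hSx⟩ := hx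
      refine ⟨⟨S.val.map (fun i => (⟨r i, hmem i⟩ : ↥V)), by simp [hScard]⟩,
        Finset.mem_coe.mpr (Finset.mem_univ _), ?_⟩
      simp only [Multiset.map_map, Function.comp]
      rw [← hSx]
      rfl
    have h1 : (Finset.image (fun S => ∑ i ∈ S, r i)
        (Finset.powersetCard s (Finset.univ : Finset (Fin N)))).card
        ≤ (Finset.univ : Finset (Sym (↥V) s)).card :=
      Finset.card_le_card_of_surjOn _ hsurj
    have h2 : (Finset.univ : Finset (Sym (↥V) s)).card = Fintype.card (Sym (↥V) s) := rfl
    have h3 : Fintype.card (Sym (↥V) s) = Nat.multichoose (Fintype.card ↥V) s :=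
      Sym.card_sym_eq_multichoose _ _
    have h4 : Fintype.card ↥V = V.card := Fintype.card_coe _
    have h5 : Nat.multichoose V.card s = (V.card + s - 1).choose s := Nat.multichoose_eq _ _
    have h6 : (V.card + s - 1).choose s ≤ (K + s - 1).choose s :=
      Nat.choose_le_choose s (by omega)
    have h7 : (K + s - 1).choose s = (s + K - 1).choose (K - 1) := by
      have : K + s - 1 = s + (K - 1) := by omega
      rw [this]
      have h8 : s + (K - 1) = s + K - 1 := by omega
      rw [Nat.choose_symm_add, h8]
    rw [h4] at h3
    omega
  -- union over sizes
  have hsub : (Finset.image (fun S => ∑ i ∈ S, r i)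
      ((Finset.univ : Finset (Finset (Fin N))).filter
        (fun S => S.Nonempty ∧ S ≠ Finset.univ)))
      ⊆ (Finset.Icc 1 (N - 1)).biUnion (fun s =>
        Finset.image (fun S => ∑ i ∈ S, r i)
          (Finset.powersetCard s (Finset.univ : Finset (Fin N)))) := by
    intro x hx
    simp only [Finset.mem_image, Finset.mem_filter, Finset.mem_univ, true_and] at hx
    obtain ⟨S, ⟨hSne, hSproper⟩, hSx⟩ := hx
    have hcard1 : 1 ≤ S.card := Finset.card_pos.mpr hSne
    have hcardlt : S.card < N := by
      have := Finset.card_lt_card (Finset.ssubset_univ_iff.mpr hSproper)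
      simpa using this
    refine Finset.mem_biUnion.mpr ⟨S.card, Finset.mem_Icc.mpr ⟨hcard1, by omega⟩, ?_⟩
    exact Finset.mem_image.mpr ⟨S, Finset.mem_powersetCard_univ.mpr rfl, hSx⟩
  have hmain : (Finset.image (fun S => ∑ i ∈ S, r i)
      ((Finset.univ : Finset (Finset (Fin N))).filter
        (fun S => S.Nonempty ∧ S ≠ Finset.univ))).card
      ≤ ∑ s ∈ Finset.Icc 1 (N - 1), Nat.choose (s + K - 1) (K - 1) := by
    calc _ ≤ ((Finset.Icc 1 (N - 1)).biUnion (fun s =>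
        Finset.image (fun S => ∑ i ∈ S, r i)
          (Finset.powersetCard s (Finset.univ : Finset (Fin N))))).card :=
        Finset.card_le_card hsub
      _ ≤ ∑ s ∈ Finset.Icc 1 (N - 1), (Finset.image (fun S => ∑ i ∈ S, r i)
          (Finset.powersetCard s (Finset.univ : Finset (Fin N)))).card :=
        Finset.card_biUnion_le
      _ ≤ ∑ s ∈ Finset.Icc 1 (N - 1), Nat.choose (s + K - 1) (K - 1) :=
        Finset.sum_le_sum (fun s _ => hsize s)
  refine ⟨hmain, hmain.trans ?_⟩
  have hterm : ∀ s ∈ Finset.Icc 1 (N - 1),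
      Nat.choose (s + K - 1) (K - 1) ≤ (N + K) ^ (K - 1) := by
    intro s hs
    rw [Finset.mem_Icc] at hs
    calc Nat.choose (s + K - 1) (K - 1) ≤ (s + K - 1) ^ (K - 1) := Nat.choose_le_pow _ _
      _ ≤ (N + K) ^ (K - 1) := Nat.pow_le_pow_left (by omega) _
  calc ∑ s ∈ Finset.Icc 1 (N - 1), Nat.choose (s + K - 1) (K - 1)
      ≤ (Finset.Icc 1 (N - 1)).card • (N + K) ^ (K - 1) :=
        Finset.sum_le_card_nsmul _ _ _ hterm
    _ = (N - 1) * (N + K) ^ (K - 1) := by rw [Nat.card_Icc]; simp [smul_eq_mul]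
    _ ≤ (N + K) * (N + K) ^ (K - 1) := Nat.mul_le_mul_right _ (by omega)
    _ = (N + K) ^ (K - 1 + 1) := by rw [pow_succ]; ring
    _ = (N + K) ^ K := by congr 1; omega
end
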